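/- Along any solution μ(t) of the bracket flow μ' = δ_μ(Ric_μ), the scalar curvature sc(t) := tr(Ric_{μ(t)}) satisfies d/dt sc = 2 tr(Ric_μ²). -/

import Mathlib

/-!
The scalar curvature is `-¼⟨μ, μ⟩`: this is the case `α = I` of `tr(Ric_μ α) = -¼⟨δ_μ(α), μ⟩`,
since `δ_μ(I) = μ`. Hence along the flow `sc' = -½⟨μ', μ⟩ = -½⟨δ_μ(Ric_μ), μ⟩ = 2 tr(Ric_μ²)`.

For the trace identity write `⟨ν, μ⟩ = Σᵢ tr((ad_ν eᵢ)ᵀ ad_μ eᵢ)`. By skew-symmetry the terms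
`μ(α·,·)` and `μ(·,α·)` of `δ_μ(α)` contribute equally, each `tr(αᵀ Σᵢ (ad eᵢ)ᵀ(ad eᵢ))`, while
`αμ(·,·)` contributes `tr(αᵀ Σᵢ (ad eᵢ)(ad eᵢ)ᵀ)`; together that is `-4 tr(αᵀ Ric_μ)`, and
`Ric_μ` is symmetric.
-/

open Matrix BigOperators

noncomputable section

/-- An element of `V_n`: a skew-symmetric bilinear map `μ : ℝⁿ × ℝⁿ → ℝⁿ`. -/
def IsSkewBil {n : ℕ} (μ : (Fin n → ℝ) → (Fin n → ℝ) → (Fin n → ℝ)) : Prop :=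
  (∀ x, IsLinearMap ℝ (μ x)) ∧ (∀ y, IsLinearMap ℝ (fun x => μ x y)) ∧
  (∀ x y, μ x y = - μ y x)

/-- The matrix of `ad_μ x : y ↦ μ(x,y)` in the canonical basis. -/
def adMat {n : ℕ} (μ : (Fin n → ℝ) → (Fin n → ℝ) → (Fin n → ℝ)) (x : Fin n → ℝ) :
    Matrix (Fin n) (Fin n) ℝ := fun i j => μ x (Pi.single j 1) i

/-- The Ricci operator `Ric_μ = -½ Σᵢ (ad_μ eᵢ)ᵀ(ad_μ eᵢ) + ¼ Σᵢ (ad_μ eᵢ)(ad_μ eᵢ)ᵀ`. -/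
def Ric {n : ℕ} (μ : (Fin n → ℝ) → (Fin n → ℝ) → (Fin n → ℝ)) :
    Matrix (Fin n) (Fin n) ℝ :=
  (-(1/2 : ℝ)) • ∑ i, (adMat μ (Pi.single i 1))ᵀ * adMat μ (Pi.single i 1)
  + (1/4 : ℝ) • ∑ i, adMat μ (Pi.single i 1) * (adMat μ (Pi.single i 1))ᵀ

/-- `δ_μ(α)(x,y) = μ(αx,y) + μ(x,αy) - αμ(x,y)`. -/
def deltaMap {n : ℕ} (μ : (Fin n → ℝ) → (Fin n → ℝ) → (Fin n → ℝ))
    (A : Matrix (Fin n) (Fin n) ℝ) : (Fin n → ℝ) → (Fin n → ℝ) → (Fin n → ℝ) :=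
  fun x y => μ (A.mulVec x) y + μ x (A.mulVec y) - A.mulVec (μ x y)

/-- The inner product `⟨μ,ν⟩ = Σ_{i,j} ⟨μ(eᵢ,eⱼ), ν(eᵢ,eⱼ)⟩` on `V_n`. -/
def innV {n : ℕ} (μ ν : (Fin n → ℝ) → (Fin n → ℝ) → (Fin n → ℝ)) : ℝ :=
  ∑ i, ∑ j, ∑ k,
    μ (Pi.single i 1) (Pi.single j 1) k * ν (Pi.single i 1) (Pi.single j 1) k

/-- `D` is a derivation of the algebra `(ℝⁿ, μ)`. -/
def IsDeriv {n : ℕ} (μ : (Fin n → ℝ) → (Fin n → ℝ) → (Fin n → ℝ))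
    (D : Matrix (Fin n) (Fin n) ℝ) : Prop :=
  ∀ x y, D.mulVec (μ x y) = μ (D.mulVec x) y + μ x (D.mulVec y)

/-- The Jacobi identity. -/
def IsJacobi {n : ℕ} (μ : (Fin n → ℝ) → (Fin n → ℝ) → (Fin n → ℝ)) : Prop :=
  ∀ x y z, μ x (μ y z) + μ y (μ z x) + μ z (μ x y) = 0

/-- `μ` is a nilpotent Lie bracket on `ℝⁿ`. -/
def IsNilBracket {n : ℕ} (μ : (Fin n → ℝ) → (Fin n → ℝ) → (Fin n → ℝ)) : Prop :=
  IsSkewBil μ ∧ IsJacobi μ ∧ ∀ x, IsNilpotent (adMat μ x)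

section BracketFlow

variable {n : ℕ}

lemma deltaMap_one (μ : (Fin n → ℝ) → (Fin n → ℝ) → (Fin n → ℝ)) : deltaMap μ 1 = μ := by
  ext x y
  simp [deltaMap]

lemma innV_deltaMap (μ ν : (Fin n → ℝ) → (Fin n → ℝ) → (Fin n → ℝ))
    (α : Matrix (Fin n) (Fin n) ℝ) :
    innV (deltaMap μ α) ν = innV (fun x y => μ (α *ᵥ x) y) ν + innV (fun x y => μ x (α *ᵥ y)) ν
      - innV (fun x y => α *ᵥ μ x y) ν := by
  simp only [innV, deltaMap, Pi.add_apply, Pi.sub_apply, add_mul, sub_mul,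
    Finset.sum_add_distrib, Finset.sum_sub_distrib]

lemma innV_mulVec_left_eq_mulVec_right {μ : (Fin n → ℝ) → (Fin n → ℝ) → (Fin n → ℝ)}
    (hμ : ∀ x y, μ x y = -μ y x) (α : Matrix (Fin n) (Fin n) ℝ) :
    innV (fun x y => μ (α *ᵥ x) y) μ = innV (fun x y => μ x (α *ᵥ y)) μ := by
  unfold innV
  rw [Finset.sum_comm]
  refine Finset.sum_congr rfl fun j _ => Finset.sum_congr rfl fun i _ =>
    Finset.sum_congr rfl fun k _ => ?_
  beta_reduce
  rw [hμ (α *ᵥ _), hμ (Pi.single i 1), Pi.neg_apply, Pi.neg_apply, neg_mul_neg]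

lemma innV_eq_sum_trace (ν μ : (Fin n → ℝ) → (Fin n → ℝ) → (Fin n → ℝ)) :
    innV ν μ = ∑ i, ((adMat ν (Pi.single i 1))ᵀ * adMat μ (Pi.single i 1)).trace := by
  simp [innV, Matrix.trace, Matrix.mul_apply, adMat]

lemma adMat_mulVec {μ : (Fin n → ℝ) → (Fin n → ℝ) → (Fin n → ℝ)} {x : Fin n → ℝ}
    (hμ : IsLinearMap ℝ (μ x)) (v : Fin n → ℝ) : adMat μ x *ᵥ v = μ x v :=
  LinearMap.toMatrix'_mulVec (IsLinearMap.mk' _ hμ) v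

lemma adMat_mulVec_right {μ : (Fin n → ℝ) → (Fin n → ℝ) → (Fin n → ℝ)} {x : Fin n → ℝ}
    (hμ : IsLinearMap ℝ (μ x)) (α : Matrix (Fin n) (Fin n) ℝ) :
    adMat (fun x y => μ x (α *ᵥ y)) x = adMat μ x * α := by
  ext k j
  rw [adMat, ← adMat_mulVec hμ, Matrix.mulVec_mulVec, Matrix.mulVec_single_one]
  rfl

lemma adMat_mulVec_out (μ : (Fin n → ℝ) → (Fin n → ℝ) → (Fin n → ℝ)) (x : Fin n → ℝ)
    (α : Matrix (Fin n) (Fin n) ℝ) :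
    adMat (fun x y => α *ᵥ μ x y) x = α * adMat μ x := by
  ext k j
  simp [adMat, Matrix.mul_apply, Matrix.mulVec, dotProduct]

lemma isSymm_Ric (μ : (Fin n → ℝ) → (Fin n → ℝ) → (Fin n → ℝ)) : (Ric μ).IsSymm := by
  simp only [Matrix.IsSymm, Ric, Matrix.transpose_add, Matrix.transpose_smul, Matrix.transpose_sum,
    Matrix.transpose_mul, Matrix.transpose_transpose]

theorem trace_Ric_mul {μ : (Fin n → ℝ) → (Fin n → ℝ) → (Fin n → ℝ)} (hμ : IsSkewBil μ)
    (α : Matrix (Fin n) (Fin n) ℝ) :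
    (Ric μ * α).trace = -(1/4) * innV (deltaMap μ α) μ := by
  set A := fun i : Fin n => adMat μ (Pi.single i 1)
  have hright : innV (fun x y => μ x (α *ᵥ y)) μ = ∑ i, (αᵀ * ((A i)ᵀ * A i)).trace := by
    simp only [innV_eq_sum_trace, adMat_mulVec_right (hμ.1 _), Matrix.transpose_mul,
      Matrix.mul_assoc, A]
  have hout : innV (fun x y => α *ᵥ μ x y) μ = ∑ i, (αᵀ * (A i * (A i)ᵀ)).trace := by
    simp only [innV_eq_sum_trace, adMat_mulVec_out, Matrix.transpose_mul, A]
    refine Finset.sum_congr rfl fun i _ => ?_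
    rw [Matrix.mul_assoc, Matrix.trace_mul_comm, Matrix.mul_assoc]
  have hRic : (Ric μ * α).trace
      = -(1/2) * ∑ i, (αᵀ * ((A i)ᵀ * A i)).trace + 1/4 * ∑ i, (αᵀ * (A i * (A i)ᵀ)).trace := by
    rw [← Matrix.trace_transpose, Matrix.transpose_mul, (isSymm_Ric μ).eq]
    simp only [Ric, Matrix.mul_add, Matrix.mul_smul, Matrix.mul_sum, Matrix.trace_add,
      Matrix.trace_smul, Matrix.trace_sum, smul_eq_mul, A]
  rw [innV_deltaMap, innV_mulVec_left_eq_mulVec_right hμ.2.2, hright, hout, hRic]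
  ring

theorem trace_Ric {μ : (Fin n → ℝ) → (Fin n → ℝ) → (Fin n → ℝ)} (hμ : IsSkewBil μ) :
    (Ric μ).trace = -(1/4) * innV μ μ := by
  rw [← Matrix.mul_one (Ric μ), trace_Ric_mul hμ, deltaMap_one]

lemma hasDerivAt_innV_self {μ : ℝ → (Fin n → ℝ) → (Fin n → ℝ) → (Fin n → ℝ)}
    {μ' : (Fin n → ℝ) → (Fin n → ℝ) → (Fin n → ℝ)} {t : ℝ}
    (h : ∀ x y, HasDerivAt (fun s => μ s x y) (μ' x y) t) :
    HasDerivAt (fun s => innV (μ s) (μ s)) (2 * innV μ' (μ t)) t := by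
  have hc : ∀ i j k : Fin n, HasDerivAt (fun s => μ s (Pi.single i 1) (Pi.single j 1) k)
      (μ' (Pi.single i 1) (Pi.single j 1) k) t :=
    fun i j k => hasDerivAt_pi.mp (h _ _) k
  refine (HasDerivAt.fun_sum fun i _ => HasDerivAt.fun_sum fun j _ =>
    HasDerivAt.fun_sum fun k _ => (hc i j k).mul (hc i j k)).congr_deriv ?_
  simp only [innV, Finset.mul_sum]
  congr! 3
  ring

end BracketFlow

/-- along the bracket flow, `d/dt tr(Ric_μ) = 2 tr(Ric_μ²)`. -/
theorem stmt13 {n : ℕ} (μ : ℝ → (Fin n → ℝ) → (Fin n → ℝ) → (Fin n → ℝ))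
    (hsb : ∀ t, IsSkewBil (μ t))
    (hflow : ∀ t, ∀ x y : Fin n → ℝ,
      HasDerivAt (fun s => μ s x y) (deltaMap (μ t) (Ric (μ t)) x y) t)
    (t : ℝ) :
    HasDerivAt (fun s => (Ric (μ s)).trace)
      (2 * (Ric (μ t) * Ric (μ t)).trace) t := by
  simp only [trace_Ric (hsb _)]
  refine ((hasDerivAt_innV_self (hflow t)).const_mul (-(1/4) : ℝ)).congr_deriv ?_
  rw [trace_Ric_mul (hsb t)]
  ring
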